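/- Let t be a positive integer. The set of hyperbinary expansions of 2^{t+1} − 2 is exactly {2^t} ∪ {1^k02^{t−k} : 1 ≤ k ≤ t} (so b(2^{t+1} − 2) = t + 1), and the single-step reductions among these expansions are exactly the consecutive pairs in the sequence 2^t, 102^{t−1}, …, 1^t0, all of type →; that is, A(2^{t+1} − 2) is a directed path graph. -/

import Mathlib

/-- The value of a word over the digits `{0,1,2}`, read as a (hyper)binary expansion:
`wordVal (x₀ … x_k) = Σ x_i · 2^(k-i)`. -/
def wordVal : List ℕ → ℕ
  | [] => 0
  | d :: w => d * 2 ^ w.length + wordVal w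

/-- `Hyp n` is the set of hyperbinary expansions of `n`: words over `{0,1,2}` with
nonzero leading digit whose value is `n` (the empty word is the unique expansion of `0`). -/
def Hyp (n : ℕ) : Set (List ℕ) :=
  {w | (∀ d ∈ w, d ≤ 2) ∧ w.head? ≠ some 0 ∧ wordVal w = n}

/-- Single-step reduction of type `→` : `(x02y, x10y)` or `(2y, 10y)`. -/
def StepArrow (a b : List ℕ) : Prop :=
  (∃ x y : List ℕ, a = x ++ 0 :: 2 :: y ∧ b = x ++ 1 :: 0 :: y) ∨
    (∃ y : List ℕ, a = 2 :: y ∧ b = 1 :: 0 :: y)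

/-- Single-step reduction of type `↠` : `(x12y, x20y)`. -/
def StepDouble (a b : List ℕ) : Prop :=
  ∃ x y : List ℕ, a = x ++ 1 :: 2 :: y ∧ b = x ++ 2 :: 0 :: y

/-- A single-step reduction (of either type). -/
def Step (a b : List ℕ) : Prop := StepArrow a b ∨ StepDouble a b

/-- `bFun n` is the number of hyperbinary expansions of `n`. -/
noncomputable def bFun (n : ℕ) : ℕ := (Hyp n).ncard

/-- The set of arcs of the graph `A(n)`: labeled single-step reductions between
hyperbinary expansions of `n`. -/
def arcs (n : ℕ) : Set (List ℕ × List ℕ) :=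
  {p | p.1 ∈ Hyp n ∧ p.2 ∈ Hyp n ∧ Step p.1 p.2}

/-- `aFun n` is the number of arcs of `A(n)`. -/
noncomputable def aFun (n : ℕ) : ℕ := (arcs n).ncard

/-- The cyclomatic number `v(n) = a(n) - b(n) + 1` of the connected graph `A(n)`. -/
noncomputable def vFun (n : ℕ) : ℕ := aFun n + 1 - bFun n

/-- The `i`-th vertex (for `0 ≤ i ≤ t`) of the directed path graph `A(2^(t+1) − 2)`:
`2^t` for `i = 0` and `1^i 0 2^(t-i)` for `1 ≤ i ≤ t`. -/
def pathWord2 (t i : ℕ) : List ℕ :=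
  if i = 0 then List.replicate t 2
  else List.replicate i 1 ++ 0 :: List.replicate (t - i) 2

lemma wordVal_append (x y : List ℕ) :
    wordVal (x ++ y) = wordVal x * 2 ^ y.length + wordVal y := by
  induction x with
  | nil => simp [wordVal]
  | cons d w ih =>
      show d * 2 ^ (w ++ y).length + wordVal (w ++ y) = _
      rw [ih, List.length_append, pow_add]
      simp only [wordVal]
      ring

lemma wordVal_replicate_two (n : ℕ) : wordVal (List.replicate n 2) + 2 = 2 ^ (n + 1) := by
  induction n with
  | zero => simp [wordVal]
  | succ k ih =>
      rw [List.replicate_succ]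
      simp only [wordVal, List.length_replicate]
      rw [pow_succ] at *
      omega

lemma wordVal_replicate_one (n : ℕ) : wordVal (List.replicate n 1) + 1 = 2 ^ n := by
  induction n with
  | zero => simp [wordVal]
  | succ k ih =>
      rw [List.replicate_succ]
      simp only [wordVal, List.length_replicate]
      rw [pow_succ] at *
      omega

lemma wordVal_le (w : List ℕ) (h : ∀ d ∈ w, d ≤ 2) :
    wordVal w + 2 ≤ 2 ^ (w.length + 1) := by
  induction w with
  | nil => simp [wordVal]
  | cons d w ih =>
      have hd : d ≤ 2 := h d (by simp)
      have ihw := ih (fun x hx => h x (by simp [hx]))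
      simp only [wordVal, List.length_cons]
      have hp : 0 < 2 ^ w.length := Nat.pow_pos (by norm_num)
      rw [pow_succ, pow_succ] at *
      nlinarith

lemma wordVal_max_case (w : List ℕ) (h : ∀ d ∈ w, d ≤ 2)
    (hv : wordVal w + 2 = 2 ^ (w.length + 1)) : w = List.replicate w.length 2 := by
  induction w with
  | nil => simp
  | cons d w ih =>
      have hd : d ≤ 2 := h d (by simp)
      have hle := wordVal_le w (fun x hx => h x (by simp [hx]))
      simp only [wordVal, List.length_cons] at hv
      have hp : 0 < 2 ^ w.length := Nat.pow_pos (by norm_num)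
      have hd2 : d = 2 ∧ wordVal w + 2 = 2 ^ (w.length + 1) := by
        rw [pow_succ] at *
        interval_cases d <;> omega
      rw [List.length_cons, List.replicate_succ, hd2.1,
        ← ih (fun x hx => h x (by simp [hx])) hd2.2]

lemma wordVal_key (w : List ℕ) (h : ∀ d ∈ w, d ≤ 2)
    (hv : wordVal w + 2 = 2 ^ w.length) :
    ∃ k, k + 1 ≤ w.length ∧
      w = List.replicate k 1 ++ 0 :: List.replicate (w.length - 1 - k) 2 := by
  induction w with
  | nil => simp [wordVal] at hv
  | cons d w ih =>
      have hd : d ≤ 2 := h d (by simp)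
      have hle := wordVal_le w (fun x hx => h x (by simp [hx]))
      simp only [wordVal, List.length_cons] at hv ⊢
      have hp : 0 < 2 ^ w.length := Nat.pow_pos (by norm_num)
      have hcases : (d = 0 ∧ wordVal w + 2 = 2 ^ (w.length + 1)) ∨
          (d = 1 ∧ wordVal w + 2 = 2 ^ w.length) := by
        rw [pow_succ] at *
        interval_cases d <;> omega
      rcases hcases with ⟨hd0, hmax⟩ | ⟨hd1, hrec⟩
      · refine ⟨0, by omega, ?_⟩
        simp [hd0, ← wordVal_max_case w (fun x hx => h x (by simp [hx])) hmax]
      · obtain ⟨k, hk, hw⟩ := ih (fun x hx => h x (by simp [hx])) hrec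
        refine ⟨k + 1, by omega, ?_⟩
        rw [hd1, hw]
        have hlen : (List.replicate k 1 ++ 0 :: List.replicate (w.length - 1 - k) 2).length
            = w.length := by simp; omega
        rw [hlen]
        have : w.length + 1 - 1 - (k + 1) = w.length - 1 - k := by omega
        rw [this]
        simp [List.replicate_succ]

lemma wordVal_pathWord2 (t i : ℕ) (hi : i ≤ t) :
    wordVal (pathWord2 t i) + 2 = 2 ^ (t + 1) := by
  unfold pathWord2
  by_cases h0 : i = 0
  · simp [h0, wordVal_replicate_two]
  · simp only [h0, if_false]
    rw [wordVal_append]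
    have hA := wordVal_replicate_one i
    have hB := wordVal_replicate_two (t - i)
    simp only [wordVal, List.length_cons, List.length_replicate, zero_mul, zero_add]
    have hpow : 2 ^ (t + 1) = 2 ^ i * 2 ^ (t - i + 1) := by
      rw [← pow_add]; congr 1; omega
    rw [hpow, ← hA, ← hB]
    ring

lemma count_one_pathWord2 (t i : ℕ) : (pathWord2 t i).count 1 = i := by
  unfold pathWord2
  by_cases h0 : i = 0
  · simp [h0, List.count_replicate]
  · simp [h0, List.count_replicate, List.count_cons, List.count_append]

lemma count_zero_pathWord2 (t i : ℕ) : (pathWord2 t i).count 0 = if i = 0 then 0 else 1 := by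
  unfold pathWord2
  by_cases h0 : i = 0
  · simp [h0, List.count_replicate]
  · simp [h0, List.count_replicate, List.count_cons, List.count_append]

lemma count_one_stepArrow {a b : List ℕ} (h : StepArrow a b) :
    b.count 1 = a.count 1 + 1 := by
  rcases h with ⟨x, y, ha, hb⟩ | ⟨y, ha, hb⟩ <;>
    subst ha <;> subst hb <;>
    simp [List.count_append, List.count_cons] <;> omega

lemma count_one_stepDouble {a b : List ℕ} (h : StepDouble a b) :
    a.count 1 = b.count 1 + 1 := by
  obtain ⟨x, y, ha, hb⟩ := h
  subst ha; subst hb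
  simp [List.count_append, List.count_cons]
  omega

lemma count_zero_stepDouble {a b : List ℕ} (h : StepDouble a b) :
    b.count 0 = a.count 0 + 1 := by
  obtain ⟨x, y, ha, hb⟩ := h
  subst ha; subst hb
  simp [List.count_append, List.count_cons]
  omega

lemma pathWord2_mem (t : ℕ) (ht : 0 < t) (i : ℕ) (hi : i ≤ t) :
    pathWord2 t i ∈ Hyp (2 ^ (t + 1) - 2) := by
  refine ⟨?_, ?_, ?_⟩
  · intro d hd
    unfold pathWord2 at hd
    by_cases h0 : i = 0 <;> simp [h0] at hd <;> omega
  · unfold pathWord2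
    by_cases h0 : i = 0
    · simp [h0]
      obtain ⟨s, rfl⟩ : ∃ s, t = s + 1 := ⟨t - 1, by omega⟩
      simp [List.replicate_succ]
    · obtain ⟨s, rfl⟩ : ∃ s, i = s + 1 := ⟨i - 1, by omega⟩
      simp [List.replicate_succ]
  · have := wordVal_pathWord2 t i hi
    omega

lemma Hyp_eq (t : ℕ) (ht : 0 < t) :
    Hyp (2 ^ (t + 1) - 2) = {w | ∃ i ≤ t, w = pathWord2 t i} := by
  ext w
  constructor
  · rintro ⟨hdig, hhead, hval⟩
    have h2 : 2 ≤ 2 ^ (t + 1) := by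
      calc 2 = 2 ^ 1 := rfl
      _ ≤ 2 ^ (t + 1) := Nat.pow_le_pow_right (by norm_num) (by omega)
    have hval' : wordVal w + 2 = 2 ^ (t + 1) := by omega
    have hub := wordVal_le w hdig
    have hlb : 2 ^ (w.length - 1) ≤ wordVal w := by
      match w, hhead with
      | [], hh =>
          exfalso
          have h4 : 4 ≤ 2 ^ (t + 1) := by
            calc (4:ℕ) = 2 ^ 2 := rfl
            _ ≤ 2 ^ (t + 1) := Nat.pow_le_pow_right (by norm_num) (by omega)
          simp [wordVal] at hval'
          omega
      | d :: r, hh =>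
          have hd1 : 1 ≤ d := by
            simp at hh; omega
          simp only [wordVal, List.length_cons, Nat.add_sub_cancel]
          calc 2 ^ r.length = 1 * 2 ^ r.length := (one_mul _).symm
          _ ≤ d * 2 ^ r.length + wordVal r := by
              exact le_trans (Nat.mul_le_mul_right _ hd1) (Nat.le_add_right _ _)
    have hlen : w.length = t ∨ w.length = t + 1 := by
      have h1 : 2 ^ (t + 1) ≤ 2 ^ (w.length + 1) := by omega
      have h2' : 2 ^ (w.length - 1) < 2 ^ (t + 1) := by omega
      have hle1 : t + 1 ≤ w.length + 1 :=
        (Nat.pow_le_pow_iff_right (by norm_num)).mp h1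
      have hle2 : w.length - 1 < t + 1 :=
        (Nat.pow_lt_pow_iff_right (by norm_num)).mp h2'
      omega
    rcases hlen with hl | hl
    · -- all twos
      have hmax : wordVal w + 2 = 2 ^ (w.length + 1) := by rw [hl]; exact hval'
      have := wordVal_max_case w hdig hmax
      exact ⟨0, by omega, by rw [pathWord2, if_pos rfl, ← hl]; exact this⟩
    · obtain ⟨k, hk, hw⟩ := wordVal_key w hdig (by rw [hl]; exact hval')
      have hk1 : 1 ≤ k := by
        rcases Nat.eq_zero_or_pos k with h0 | h0
        · exfalso
          rw [h0] at hw
          simp at hw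
          rw [hw] at hhead
          simp at hhead
        · exact h0
      refine ⟨k, by omega, ?_⟩
      have harith : t + 1 - 1 - k = t - k := by omega
      rw [hw, pathWord2, if_neg (by omega), hl, harith]
  · rintro ⟨i, hi, rfl⟩
    exact pathWord2_mem t ht i hi

lemma pathWord2_injective (t : ℕ) : Function.Injective (pathWord2 t) := by
  intro i j h
  have := count_one_pathWord2 t i
  rw [h, count_one_pathWord2 t j] at this
  omega

lemma bFun_eq (t : ℕ) (ht : 0 < t) : bFun (2 ^ (t + 1) - 2) = t + 1 := by
  rw [bFun, Hyp_eq t ht]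
  have hS : {w | ∃ i ≤ t, w = pathWord2 t i} = pathWord2 t '' Set.Iic t := by
    ext w
    simp only [Set.mem_setOf_eq, Set.mem_image, Set.mem_Iic]
    constructor
    · rintro ⟨i, hi, rfl⟩; exact ⟨i, hi, rfl⟩
    · rintro ⟨i, hi, rfl⟩; exact ⟨i, hi, rfl⟩
  rw [hS, Set.ncard_image_of_injective _ (pathWord2_injective t),
    ← Finset.coe_Iic, Set.ncard_coe_finset, Nat.card_Iic]

lemma stepArrow_succ (t i : ℕ) (hi : i + 1 ≤ t) :
    StepArrow (pathWord2 t i) (pathWord2 t (i + 1)) := by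
  by_cases h0 : i = 0
  · right
    refine ⟨List.replicate (t - 1) 2, ?_, ?_⟩
    · subst h0; rw [pathWord2, if_pos rfl]
      obtain ⟨s, rfl⟩ : ∃ s, t = s + 1 := ⟨t - 1, by omega⟩
      simp [List.replicate_succ]
    · subst h0; rw [pathWord2, if_neg (by omega : ¬(0 + 1 = 0))]; simp
  · left
    refine ⟨List.replicate i 1, List.replicate (t - i - 1) 2, ?_, ?_⟩
    · rw [pathWord2, if_neg h0]
      have h1 : List.replicate (t - i) 2 = 2 :: List.replicate (t - i - 1) 2 := by
        conv_lhs => rw [(by omega : t - i = (t - i - 1) + 1), List.replicate_succ]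
      rw [h1]
    · rw [pathWord2, if_neg (by omega)]
      have h2 : t - (i + 1) = t - i - 1 := by omega
      rw [h2, List.replicate_succ', List.append_assoc]
      rfl

/-- For a positive integer `t`, the hyperbinary expansions of `2^(t+1) − 2` are exactly
`{2^t} ∪ {1^k02^(t-k) : 1 ≤ k ≤ t}` (so `b(2^(t+1) − 2) = t + 1`), and the single-step
reductions among them are exactly the consecutive pairs in the sequence
`2^t → 102^(t-1) → ⋯ → 1^t0`, all of type `→`; that is, `A(2^(t+1) − 2)` is a
directed path graph. -/
theorem A_pow_two_sub_two (t : ℕ) (ht : 0 < t) :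
    Hyp (2 ^ (t + 1) - 2) = {w | ∃ i ≤ t, w = pathWord2 t i} ∧
    bFun (2 ^ (t + 1) - 2) = t + 1 ∧
    ∀ i, i ≤ t → ∀ j, j ≤ t →
      (StepArrow (pathWord2 t i) (pathWord2 t j) ↔ j = i + 1) ∧
      ¬StepDouble (pathWord2 t i) (pathWord2 t j) := by
  refine ⟨Hyp_eq t ht, bFun_eq t ht, fun i hi j hj => ⟨⟨fun h => ?_, fun h => ?_⟩, fun h => ?_⟩⟩
  · have := count_one_stepArrow h
    rw [count_one_pathWord2, count_one_pathWord2] at this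
    omega
  · subst h; exact stepArrow_succ t i hj
  · have h1 := count_one_stepDouble h
    have h2 := count_zero_stepDouble h
    rw [count_one_pathWord2, count_one_pathWord2] at h1
    rw [count_zero_pathWord2, count_zero_pathWord2] at h2
    split_ifs at h2 <;> omega
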